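/- arXiv:1902.06045 — 2 statements merged into one kernel-verified Lean document; each statement's English description precedes it below -/
import Mathlib

section
/- Let Θ : ℝ¹⁰ → ℝ be a smooth function of (x¹,…,x⁵,y¹,…,y⁵) and set ω_{ik} = Θ_{x^i y^k} − Θ_{x^k y^i} for i,k = 1,…,5. Then, with ε^{iklm} the Levi-Civita symbol on four indices and all sums over i,k,l,m from 1 to 4, the identity ∂_{y⁵}( Σ ε^{iklm} ω_{ik} ω_{lm} ) = 4 Σ ∂_{y^m}( ε^{iklm} ω_{ik} ω_{l5} ) holds at every point of ℝ¹⁰. -/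
noncomputable section

/-- Partial derivative of `f : ℝⁿ → ℝ` in the `i`-th coordinate direction. -/
def pd {n : ℕ} (i : Fin n) (f : (Fin n → ℝ) → ℝ) : (Fin n → ℝ) → ℝ :=
  fun p => fderiv ℝ f p (Pi.single i 1)

/-- `∂/∂x^i` on functions of `(x¹,…,x⁵,y¹,…,y⁵) ∈ ℝ¹⁰`. -/
def px5 (i : Fin 5) (f : (Fin 10 → ℝ) → ℝ) : (Fin 10 → ℝ) → ℝ :=
  pd ⟨i.val, by omega⟩ f

/-- `∂/∂y^i` on functions of `(x¹,…,x⁵,y¹,…,y⁵) ∈ ℝ¹⁰`. -/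
def py5 (i : Fin 5) (f : (Fin 10 → ℝ) → ℝ) : (Fin 10 → ℝ) → ℝ :=
  pd ⟨i.val + 5, by omega⟩ f

/-- Levi-Civita symbol on indices `1,…,4`. -/
def eps4 (i k l m : Fin 4) : ℝ :=
  Matrix.det (Matrix.of fun r c : Fin 4 => if (![i, k, l, m]) r = c then (1 : ℝ) else 0)

/-- `ω_{ik} = Θ_{x^i y^k} − Θ_{x^k y^i}` for `i,k = 1,…,5`. -/
def omg5 (Θ : (Fin 10 → ℝ) → ℝ) (i k : Fin 5) : (Fin 10 → ℝ) → ℝ :=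
  fun p => px5 i (py5 k Θ) p - px5 k (py5 i Θ) p

/-- The embedding of the indices `1,…,4` into `1,…,5`. -/
def e45 (i : Fin 4) : Fin 5 := i.castSucc

/-! Expand both sides by the product rule. Writing `T a b c = ∂_{y^c} ∂_{x^a} ∂_{y^b} Θ`, which
is symmetric in `b, c`, every derivative of `ω` is `∂_{y^c} ω_{ab} = T a b c - T b a c`. Contracted
with `ε`, any term symmetric in two slots of `ε` vanishes; this kills `ε^{iklm} ∂_{y^m} ω_{ik}`
(a Bianchi identity) and the `∂_{x⁵}` part of `∂_{y^m} ω_{l5}`. Using `ε^{iklm} = ε^{lmik} =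
-ε^{ikml}`, both sides reduce to `4 Σ ε^{iklm} ω_{ik} T l m 5`. -/

open Finset Equiv

section PartialDerivatives

variable {n : ℕ}

theorem contDiff_pd {m k : WithTop ℕ∞} {f : (Fin n → ℝ) → ℝ} (i : Fin n) (hf : ContDiff ℝ k f)
    (hmk : m + 1 ≤ k) : ContDiff ℝ m (pd i f) :=
  (hf.fderiv_right hmk).clm_apply contDiff_const

theorem pd_pd_comm {f : (Fin n → ℝ) → ℝ} {p : Fin n → ℝ} (hf : ContDiffAt ℝ 2 f p) (i j : Fin n) :
    pd i (pd j f) p = pd j (pd i f) p := by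
  have hsymm : IsSymmSndFDerivAt ℝ f p :=
    hf.isSymmSndFDerivAt (by simp [minSmoothness_of_isRCLikeNormedField])
  have hd : DifferentiableAt ℝ (fderiv ℝ f) p :=
    (hf.fderiv_right (m := 1) le_rfl).differentiableAt one_ne_zero
  have hfderiv2 : ∀ v w : Fin n → ℝ,
      fderiv ℝ (fun q => fderiv ℝ f q v) p w = fderiv ℝ (fderiv ℝ f) p w v := by
    intro v w
    rw [fderiv_clm_apply hd (differentiableAt_const v)]
    simp
  unfold pd
  rw [hfderiv2, hfderiv2, hsymm.eq]

variable {f g : (Fin n → ℝ) → ℝ} {p : Fin n → ℝ} (j : Fin n)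

theorem pd_sum {ι : Type*} (s : Finset ι) {A : ι → (Fin n → ℝ) → ℝ}
    (hA : ∀ i ∈ s, DifferentiableAt ℝ (A i) p) :
    pd j (fun q => ∑ i ∈ s, A i q) p = ∑ i ∈ s, pd j (A i) p := by
  simp [pd, fderiv_fun_sum hA]

theorem pd_sub (hf : DifferentiableAt ℝ f p) (hg : DifferentiableAt ℝ g p) :
    pd j (fun q => f q - g q) p = pd j f p - pd j g p := by
  simp [pd, fderiv_fun_sub hf hg]

theorem pd_const_mul_mul (c : ℝ) (hf : DifferentiableAt ℝ f p) (hg : DifferentiableAt ℝ g p) :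
    pd j (fun q => c * f q * g q) p = c * (pd j f p * g p + f p * pd j g p) := by
  simp [pd, fderiv_fun_mul (hf.const_mul c) hg, fderiv_const_mul hf]
  ring

theorem pd_pd_pd_swap_outer (hf : ContDiff ℝ 3 f) (i j k : Fin n) (p : Fin n → ℝ) :
    pd k (pd i (pd j f)) p = pd j (pd i (pd k f)) p := by
  have hf' : ∀ l, ContDiff ℝ 2 (pd l f) := fun l => contDiff_pd l hf (by norm_num)
  have hkj : pd k (pd j f) = pd j (pd k f) :=
    funext fun q => pd_pd_comm (hf.of_le (by norm_num)).contDiffAt k j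
  rw [pd_pd_comm (hf' j).contDiffAt, hkj, pd_pd_comm (hf' k).contDiffAt]

end PartialDerivatives

section Omega

variable {Θ : (Fin 10 → ℝ) → ℝ} (hΘ : ContDiff ℝ 3 Θ)
include hΘ

theorem differentiable_px5_py5 (a b : Fin 5) : Differentiable ℝ (px5 a (py5 b Θ)) :=
  (contDiff_pd (m := 1) _ (contDiff_pd (m := 2) _ hΘ (by norm_num)) (by norm_num)).differentiable
    one_ne_zero

theorem differentiable_omg5 (a b : Fin 5) : Differentiable ℝ (omg5 Θ a b) :=
  (differentiable_px5_py5 hΘ a b).sub (differentiable_px5_py5 hΘ b a)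

theorem pd_omg5 (j : Fin 10) (a b : Fin 5) (p : Fin 10 → ℝ) :
    pd j (omg5 Θ a b) p = pd j (px5 a (py5 b Θ)) p - pd j (px5 b (py5 a Θ)) p :=
  pd_sub j (differentiable_px5_py5 hΘ a b p) (differentiable_px5_py5 hΘ b a p)

theorem py5_px5_py5_comm (a b c : Fin 5) (p : Fin 10 → ℝ) :
    py5 c (px5 a (py5 b Θ)) p = py5 b (px5 a (py5 c Θ)) p :=
  pd_pd_pd_swap_outer hΘ _ _ _ p

end Omega

section LeviCivita

variable {n : ℕ}

def leviCivita (v : Fin n → Fin n) : ℝ :=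
  Matrix.det (Matrix.of fun r c : Fin n => if v r = c then (1 : ℝ) else 0)

theorem leviCivita_comp_perm (v : Fin n → Fin n) (σ : Perm (Fin n)) :
    leviCivita (v ∘ σ) = Perm.sign σ * leviCivita v :=
  Matrix.det_permute σ (Matrix.of fun r c => if v r = c then (1 : ℝ) else 0)

theorem sum_leviCivita_mul_comp_perm (F : (Fin n → Fin n) → ℝ) (σ : Perm (Fin n)) :
    ∑ v, leviCivita v * F (v ∘ σ) = Perm.sign σ * ∑ v, leviCivita v * F v := by
  rw [mul_sum, ← (σ.arrowCongr (Equiv.refl (Fin n))).sum_comp]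
  refine sum_congr rfl fun v _ => ?_
  have hv : σ.arrowCongr (Equiv.refl (Fin n)) v ∘ σ = v := by ext; simp
  rw [hv, show σ.arrowCongr (Equiv.refl (Fin n)) v = v ∘ σ.symm from rfl, leviCivita_comp_perm,
    Perm.sign_symm, ← mul_assoc]

end LeviCivita

theorem Fintype.sum_fin_succ_pi {α M : Type*} [Fintype α] [AddCommMonoid M] {n : ℕ}
    (G : (Fin (n + 1) → α) → M) : ∑ v, G v = ∑ a, ∑ v : Fin n → α, G (Fin.cons a v) := by
  rw [← (Fin.consEquiv fun _ => α).sum_comp, Fintype.sum_prod_type]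
  rfl

theorem Fintype.sum_fin_four_pi {α M : Type*} [Fintype α] [AddCommMonoid M]
    (G : (Fin 4 → α) → M) : ∑ v, G v = ∑ i, ∑ k, ∑ l, ∑ m, G ![i, k, l, m] := by
  simp only [Fintype.sum_fin_succ_pi, Fintype.sum_unique]
  rfl

def epsSum (F : Fin 4 → Fin 4 → Fin 4 → Fin 4 → ℝ) : ℝ :=
  ∑ i, ∑ k, ∑ l, ∑ m, eps4 i k l m * F i k l m

namespace epsSum

theorem add (F G : Fin 4 → Fin 4 → Fin 4 → Fin 4 → ℝ) :
    epsSum (fun i k l m => F i k l m + G i k l m) = epsSum F + epsSum G := by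
  simp only [epsSum, mul_add, sum_add_distrib]

theorem sub (F G : Fin 4 → Fin 4 → Fin 4 → Fin 4 → ℝ) :
    epsSum (fun i k l m => F i k l m - G i k l m) = epsSum F - epsSum G := by
  simp only [epsSum, mul_sub, sum_sub_distrib]

theorem comp_perm (F : Fin 4 → Fin 4 → Fin 4 → Fin 4 → ℝ) (σ : Perm (Fin 4)) :
    epsSum (fun i k l m => F (![i, k, l, m] (σ 0)) (![i, k, l, m] (σ 1))
      (![i, k, l, m] (σ 2)) (![i, k, l, m] (σ 3))) = Perm.sign σ * epsSum F := by
  have h := sum_leviCivita_mul_comp_perm (fun v => F (v 0) (v 1) (v 2) (v 3)) σ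
  rw [Fintype.sum_fin_four_pi, Fintype.sum_fin_four_pi] at h
  -- `h` is the goal once `eps4 i k l m` is unfolded to `leviCivita ![i, k, l, m]`
  exact h

theorem swap_pairs (F : Fin 4 → Fin 4 → Fin 4 → Fin 4 → ℝ) :
    epsSum (fun i k l m => F l m i k) = epsSum F := by
  have h := comp_perm F (swap 0 2 * swap 1 3)
  rwa [show Perm.sign (swap (0 : Fin 4) 2 * swap 1 3) = 1 by decide, Units.val_one, Int.cast_one,
    one_mul] at h

theorem swap_last (F : Fin 4 → Fin 4 → Fin 4 → Fin 4 → ℝ) :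
    epsSum (fun i k l m => F i k m l) = -epsSum F := by
  have h := comp_perm F (swap 2 3)
  rwa [Perm.sign_swap (by decide), Units.val_neg, Units.val_one, Int.cast_neg, Int.cast_one,
    neg_one_mul] at h

theorem eq_zero_of_swap {F : Fin 4 → Fin 4 → Fin 4 → Fin 4 → ℝ} {a b : Fin 4} (hab : a ≠ b)
    (hF : ∀ i k l m, F (![i, k, l, m] (swap a b 0)) (![i, k, l, m] (swap a b 1))
      (![i, k, l, m] (swap a b 2)) (![i, k, l, m] (swap a b 3)) = F i k l m) :
    epsSum F = 0 := by
  have h := comp_perm F (swap a b)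
  simp only [hF] at h
  rw [Perm.sign_swap hab, Units.val_neg, Units.val_one, Int.cast_neg, Int.cast_one,
    neg_one_mul] at h
  linarith

end epsSum

theorem epsSum_eq_sum_last (F : Fin 4 → Fin 4 → Fin 4 → Fin 4 → ℝ) :
    epsSum F = ∑ m, ∑ i, ∑ k, ∑ l, eps4 i k l m * F i k l m := by
  symm
  rw [sum_comm]
  refine sum_congr rfl fun i _ => ?_
  rw [sum_comm]
  exact sum_congr rfl fun k _ => sum_comm

theorem epsSum_expanded_identity (ω : Fin 5 → Fin 5 → ℝ) (T : Fin 5 → Fin 5 → Fin 5 → ℝ)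
    (hT : ∀ a b c, T a b c = T a c b) :
    epsSum (fun i k l m =>
        (T (e45 i) (e45 k) (Fin.last 4) - T (e45 k) (e45 i) (Fin.last 4)) * ω (e45 l) (e45 m)
          + ω (e45 i) (e45 k) * (T (e45 l) (e45 m) (Fin.last 4) - T (e45 m) (e45 l) (Fin.last 4)))
      = 4 * epsSum (fun i k l m =>
        (T (e45 i) (e45 k) (e45 m) - T (e45 k) (e45 i) (e45 m)) * ω (e45 l) (Fin.last 4)
          + ω (e45 i) (e45 k) *
            (T (e45 l) (Fin.last 4) (e45 m) - T (Fin.last 4) (e45 l) (e45 m))) := by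
  have hpairs : epsSum (fun i k l m =>
        (T (e45 i) (e45 k) (Fin.last 4) - T (e45 k) (e45 i) (Fin.last 4)) * ω (e45 l) (e45 m))
      = epsSum (fun i k l m =>
        ω (e45 i) (e45 k) * (T (e45 l) (e45 m) (Fin.last 4) - T (e45 m) (e45 l) (Fin.last 4))) := by
    rw [← epsSum.swap_pairs]
    congr 1
    funext i k l m
    ring
  have hlast : epsSum (fun i k l m => ω (e45 i) (e45 k) *
      (T (e45 l) (e45 m) (Fin.last 4) - T (e45 m) (e45 l) (Fin.last 4)))
      = 2 * epsSum (fun i k l m => ω (e45 i) (e45 k) * T (e45 l) (e45 m) (Fin.last 4)) := by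
    simp only [mul_sub]
    rw [epsSum.sub,
      epsSum.swap_last fun i k l m => ω (e45 i) (e45 k) * T (e45 l) (e45 m) (Fin.last 4)]
    ring
  have hkm : epsSum (fun i k l m => T (e45 i) (e45 k) (e45 m) * ω (e45 l) (Fin.last 4)) = 0 :=
    epsSum.eq_zero_of_swap (a := 1) (b := 3) (by decide)
      (fun i k l m => congrArg (· * ω (e45 l) (Fin.last 4)) (hT _ _ _))
  have him : epsSum (fun i k l m => T (e45 k) (e45 i) (e45 m) * ω (e45 l) (Fin.last 4)) = 0 :=
    epsSum.eq_zero_of_swap (a := 0) (b := 3) (by decide)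
      (fun i k l m => congrArg (· * ω (e45 l) (Fin.last 4)) (hT _ _ _))
  have hlm : epsSum (fun i k l m => ω (e45 i) (e45 k) * T (Fin.last 4) (e45 l) (e45 m)) = 0 :=
    epsSum.eq_zero_of_swap (a := 2) (b := 3) (by decide)
      (fun i k l m => congrArg (ω (e45 i) (e45 k) * ·) (hT _ _ _))
  rw [epsSum.add, epsSum.add, hpairs, hlast]
  simp only [sub_mul, mul_sub, epsSum.sub, hkm, him, hlm, hT _ (Fin.last 4)]
  ring

/-- the identity
`∂_{y⁵}( Σ ε^{iklm} ω_{ik} ω_{lm} ) = 4 Σ ∂_{y^m}( ε^{iklm} ω_{ik} ω_{l5} )`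
holds at every point of `ℝ¹⁰` (sums over `i,k,l,m` from 1 to 4). -/
theorem stmt10 (Θ : (Fin 10 → ℝ) → ℝ) (hΘ : ContDiff ℝ (⊤ : ℕ∞) Θ) :
    ∀ pt : Fin 10 → ℝ,
      py5 (Fin.last 4)
          (fun q => ∑ i, ∑ k, ∑ l, ∑ m,
            eps4 i k l m * omg5 Θ (e45 i) (e45 k) q * omg5 Θ (e45 l) (e45 m) q) pt =
        4 * ∑ m : Fin 4, py5 (e45 m)
          (fun q => ∑ i, ∑ k, ∑ l,
            eps4 i k l m * omg5 Θ (e45 i) (e45 k) q * omg5 Θ (e45 l) (Fin.last 4) q) pt := by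
  intro pt
  have hΘ3 : ContDiff ℝ 3 Θ := hΘ.of_le (WithTop.coe_le_coe.mpr le_top)
  have hω := differentiable_omg5 hΘ3
  simp (disch := fun_prop) only [py5, pd_sum, pd_const_mul_mul, pd_omg5 hΘ3]
  rw [← epsSum_eq_sum_last]
  exact epsSum_expanded_identity (fun a b => omg5 Θ a b pt)
    (fun a b c => py5 c (px5 a (py5 b Θ)) pt) (fun a b c => py5_px5_py5_comm hΘ3 a b c pt)
end
end

section
/- (Travelling wave reduction of the TED equation.) Let Θ : ℝ⁸ → ℝ be smooth and let λ₁,…,λ₄ ∈ ℝ. Suppose Θ satisfies the travelling wave constraints Θ_{y^i} = λ_i Θ_{x^i} for each i = 1,…,4 at every point. Then ω_{ik} = Θ_{x^i y^k} − Θ_{x^k y^i} = (λ_k − λ_i) Θ_{x^i x^k}, and the left-hand side of the 4+4-dimensional TED equation, (Θ_{x¹y²} − Θ_{x²y¹})(Θ_{x³y⁴} − Θ_{x⁴y³}) + (Θ_{x²y³} − Θ_{x³y²})(Θ_{x¹y⁴} − Θ_{x⁴y¹}) + (Θ_{x³y¹} − Θ_{x¹y³})(Θ_{x²y⁴} − Θ_{x⁴y²}),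 equals (λ₁−λ₂)(λ₃−λ₄)Θ_{x¹x²}Θ_{x³x⁴} + (λ₂−λ₃)(λ₁−λ₄)Θ_{x²x³}Θ_{x¹x⁴} + (λ₃−λ₁)(λ₂−λ₄)Θ_{x³x¹}Θ_{x²x⁴}. In particular, Θ satisfies the TED equation at a point if and only if it satisfies the symmetric general heavenly equation there. -/
noncomputable section

/-- `∂/∂x^i` on functions of `(x¹,…,x⁴,y¹,…,y⁴) ∈ ℝ⁸`. -/
def px (i : Fin 4) (f : (Fin 8 → ℝ) → ℝ) : (Fin 8 → ℝ) → ℝ :=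
  pd ⟨i.val, by omega⟩ f

/-- `∂/∂y^i` on functions of `(x¹,…,x⁴,y¹,…,y⁴) ∈ ℝ⁸`. -/
def py (i : Fin 4) (f : (Fin 8 → ℝ) → ℝ) : (Fin 8 → ℝ) → ℝ :=
  pd ⟨i.val + 4, by omega⟩ f

/-- `ω_{ik} = Θ_{x^i y^k} − Θ_{x^k y^i}`. -/
def omg (Θ : (Fin 8 → ℝ) → ℝ) (i k : Fin 4) : (Fin 8 → ℝ) → ℝ :=
  fun p => px i (py k Θ) p - px k (py i Θ) p

/-- The left-hand side of the 4+4-dimensional TED equation. -/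
def tedLHS (Θ : (Fin 8 → ℝ) → ℝ) (p : Fin 8 → ℝ) : ℝ :=
  omg Θ 0 1 p * omg Θ 2 3 p + omg Θ 1 2 p * omg Θ 0 3 p + omg Θ 2 0 p * omg Θ 1 3 p

/-- The left-hand side of the symmetric general heavenly equation with parameters
`λ₁,…,λ₄`. -/
def heavLHS (Θ : (Fin 8 → ℝ) → ℝ) (lam : Fin 4 → ℝ) (p : Fin 8 → ℝ) : ℝ :=
  (lam 0 - lam 1) * (lam 2 - lam 3) * (px 0 (px 1 Θ) p * px 2 (px 3 Θ) p) +
  (lam 1 - lam 2) * (lam 0 - lam 3) * (px 1 (px 2 Θ) p * px 0 (px 3 Θ) p) +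
  (lam 2 - lam 0) * (lam 1 - lam 3) * (px 2 (px 0 Θ) p * px 1 (px 3 Θ) p)


/-! The travelling wave constraint turns `Θ_{x^i y^k}` into `λ_k Θ_{x^i x^k}`, so by the symmetry
of second derivatives `ω_{ik} = (λ_k − λ_i) Θ_{x^i x^k}`; substituting this into the three
products of the TED equation gives the three terms of the symmetric general heavenly equation. -/

section PartialDerivatives

variable {n : ℕ} {f : (Fin n → ℝ) → ℝ}

lemma pd_const_mul (c : ℝ) (i : Fin n) :
    pd i (fun p => c * f p) = fun p => c * pd i f p := by
  funext p
  simp only [pd, ← smul_eq_mul, ← Pi.smul_def, fderiv_const_smul_field,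
    Pi.smul_apply, smul_apply]

lemma pd_comm {p : Fin n → ℝ} (hf : ContDiffAt ℝ 2 f p) (i k : Fin n) :
    pd i (pd k f) p = pd k (pd i f) p := by
  have hdiff : DifferentiableAt ℝ (fderiv ℝ f) p :=
    (hf.fderiv_right (m := 1) le_rfl).differentiableAt one_ne_zero
  have hsecond : ∀ v w : Fin n → ℝ,
      fderiv ℝ (fun q => fderiv ℝ f q w) p v = fderiv ℝ (fderiv ℝ f) p v w := fun v w => by
    simp [fderiv_clm_apply hdiff (differentiableAt_const w)]
  have hsymm : IsSymmSndFDerivAt ℝ f p :=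
    hf.isSymmSndFDerivAt (by simp [minSmoothness_of_isRCLikeNormedField])
  unfold pd
  rw [hsecond, hsecond, hsymm]

end PartialDerivatives

lemma omg_eq_of_travelling_wave {Θ : (Fin 8 → ℝ) → ℝ} (hΘ : ContDiff ℝ 2 Θ) {lam : Fin 4 → ℝ}
    (htw : ∀ i : Fin 4, ∀ p : Fin 8 → ℝ, py i Θ p = lam i * px i Θ p) (i k : Fin 4)
    (p : Fin 8 → ℝ) : omg Θ i k p = (lam k - lam i) * px i (px k Θ) p := by
  have hpy : ∀ j, py j Θ = fun q => lam j * px j Θ q := fun j => funext (htw j)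
  have hcomm : px k (px i Θ) p = px i (px k Θ) p := pd_comm hΘ.contDiffAt _ _
  simp only [omg, hpy, px, pd_const_mul] at hcomm ⊢
  rw [hcomm]
  ring

lemma tedLHS_eq_heavLHS_of_omg {Θ : (Fin 8 → ℝ) → ℝ} {lam : Fin 4 → ℝ}
    (homg : ∀ i k : Fin 4, ∀ p : Fin 8 → ℝ, omg Θ i k p = (lam k - lam i) * px i (px k Θ) p)
    (p : Fin 8 → ℝ) : tedLHS Θ p = heavLHS Θ lam p := by
  simp only [tedLHS, heavLHS, homg]
  ring

/-- travelling wave reduction: if a smooth `Θ` satisfies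
`Θ_{y^i} = λ_i Θ_{x^i}` everywhere, then `ω_{ik} = (λ_k − λ_i) Θ_{x^i x^k}`, the left-hand
side of the 4+4-dimensional TED equation equals the left-hand side of the symmetric general
heavenly equation, and the TED equation holds at a point iff the symmetric general heavenly
equation holds there. -/
theorem stmt12 (Θ : (Fin 8 → ℝ) → ℝ) (hΘ : ContDiff ℝ (⊤ : ℕ∞) Θ) (lam : Fin 4 → ℝ)
    (htw : ∀ i : Fin 4, ∀ p : Fin 8 → ℝ, py i Θ p = lam i * px i Θ p) :
    (∀ i k : Fin 4, ∀ p : Fin 8 → ℝ, omg Θ i k p = (lam k - lam i) * px i (px k Θ) p) ∧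
    (∀ p : Fin 8 → ℝ, tedLHS Θ p = heavLHS Θ lam p) ∧
    (∀ p : Fin 8 → ℝ, (tedLHS Θ p = 0 ↔ heavLHS Θ lam p = 0)) := by
  have homg := omg_eq_of_travelling_wave (hΘ.of_le (WithTop.coe_le_coe.mpr le_top)) htw
  have hted := tedLHS_eq_heavLHS_of_omg homg
  exact ⟨homg, hted, fun p => by rw [hted]⟩
end
end
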